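/- arXiv:math/0703707 — 2 statements merged into one kernel-verified Lean document; each statement's English description precedes it below -/
import Mathlib

section
/- Let p be an odd prime, d ≥ 2 with d ∣ p−1, f = (p−1)/d. For all 0 ≤ k ≤ d−1: Σ_{l=0}^{d−1} η_l · η_{l+k} = p·δ_{θk} − f, where δ_{θk} is Kronecker's delta and period indices are taken mod d. -/
open Finset

/-- The Gauss period `η_i = Σ_{u=0}^{f-1} ζ^{ω^{du+i}}`. -/
noncomputable def gaussPeriod (p d f : ℕ) (ω : (ZMod p)ˣ) (ζ : ℂ) (i : ℕ) : ℂ :=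
  ∑ u ∈ Finset.range f, ζ ^ (((ω : ZMod p) ^ (d * u + i)).val)

/-- The cyclotomic number `(i,j)` of order `d`. -/
noncomputable def cycNum (p d f : ℕ) (ω : (ZMod p)ˣ) (i j : ℕ) : ℕ :=
  Nat.card {uv : ℕ × ℕ // uv.1 < f ∧ uv.2 < f ∧
    (1 : ZMod p) + (ω : ZMod p) ^ (d * uv.1 + i) = (ω : ZMod p) ^ (d * uv.2 + j)}

/-- The cyclotomic integer `n(k,ν) = Σ_{i=0}^{d-1} η_i^k · η_{i+ν}`. -/
noncomputable def nInt (p d f : ℕ) (ω : (ZMod p)ˣ) (ζ : ℂ) (k ν : ℕ) : ℂ :=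
  ∑ i ∈ Finset.range d, (gaussPeriod p d f ω ζ i) ^ k * gaussPeriod p d f ω ζ (i + ν)

/-- `θ = 0` if `f` is even, `θ = d/2` if `f` is odd. -/
def theta (d f : ℕ) : ℕ := if Even f then 0 else d / 2

/-- `N(k,a)`: the number of `k`-tuples of nonzero `d`-th powers summing to `a`. -/
noncomputable def waringCount (p d k : ℕ) (a : ZMod p) : ℕ :=
  Nat.card {t : Fin k → ZMod p //
    (∀ i, ∃ b : (ZMod p)ˣ, ((b : ZMod p)) ^ d = t i) ∧ ∑ i, t i = a}

/-- `s_d(p,a)`: the least `k ≥ 1` such that `a` is a sum of `k` nonzero `d`-th powers. -/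
noncomputable def sWaring (p d : ℕ) (a : ZMod p) : ℕ :=
  sInf {k | 1 ≤ k ∧ ∃ u : Fin k → (ZMod p)ˣ, a = ∑ i, ((u i : ZMod p)) ^ d}

/-- `g_d(p) = max_{a ∈ 𝔽_p^*} s_d(p,a)`. -/
noncomputable def gWaring (p d : ℕ) : ℕ :=
  sSup {s | ∃ a : (ZMod p)ˣ, s = sWaring p d (a : ZMod p)}

/-- Product of a chain of cyclotomic numbers `(a,x₁)(x₁,x₂)⋯(xₘ,b)`. -/
noncomputable def chainProd (c : ℕ → ℕ → ℕ) (a b : ℕ) : List ℕ → ℕ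
  | [] => c a b
  | x :: xs => c a x * chainProd c x b xs

/-- Sum over all chains of `m` intermediate indices `0 ≤ i < d` of the products
`(a,i₂)(i₂,i₃)⋯(i_{m+1},b)` of consecutive cyclotomic numbers. -/
noncomputable def chainSum (d : ℕ) (c : ℕ → ℕ → ℕ) (a b m : ℕ) : ℕ :=
  ∑ v : Fin m → Fin d, chainProd c a b (List.ofFn fun i => ((v i : ℕ)))

/-! Let `ψ a = ζ ^ a.val` be the standard additive character of `𝔽_p` and `x = ω`, of order
`p - 1 = d f`. Substituting `v = u + w` (mod `f`) in the second factor of `η_l η_{l+k}` gives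
`ψ (x^{du+l}) ψ (x^{d(u+w)+l+k}) = ψ (x^{du+l} (1 + x^{dw+k}))`, and `(l, u) ↦ du + l` runs once
through the exponents `0 ≤ n < p - 1`. So the sum is `Σ_w Σ_{y ∈ 𝔽_p^*} ψ (y (1 + x^{dw+k}))`,
whose inner sum is `p - 1` or `-1` according as `1 + x^{dw+k}` vanishes or not. Since
`-1 = x^{df/2}` and `df/2 = d ⌊f/2⌋ + θ`, it vanishes for exactly one `w` if `k = θ` and for
none otherwise. -/

theorem Function.Periodic.sum_range_add_left {M : Type*} [AddCancelCommMonoid M] {F : ℕ → M}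
    {f : ℕ} (hF : Function.Periodic F f) (u : ℕ) :
    ∑ v ∈ range f, F (u + v) = ∑ v ∈ range f, F v := by
  induction u with
  | zero => simp
  | succ u ih =>
    have h := sum_range_succ' (fun v => F (u + v)) f
    rw [sum_range_succ, hF u, add_zero] at h
    simp only [add_right_comm u 1, add_assoc]
    rw [← ih, add_right_cancel h]

theorem Finset.sum_range_mul_eq_sum_sum {M : Type*} [AddCommMonoid M] (g : ℕ → M) (d f : ℕ) :
    ∑ n ∈ range (d * f), g n = ∑ u ∈ range f, ∑ l ∈ range d, g (d * u + l) := by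
  induction f with
  | zero => simp
  | succ f ih => rw [mul_add_one, sum_range_add, ih, sum_range_succ]

theorem Nat.mul_add_eq_mul_add_iff {d w k v l : ℕ} (hk : k < d) (hl : l < d) :
    d * w + k = d * v + l ↔ w = v ∧ k = l := by
  refine ⟨fun h => ?_, fun ⟨hwv, hkl⟩ => hwv ▸ hkl ▸ rfl⟩
  have hd : 0 < d := by omega
  have hdiv := congrArg (· / d) h
  have hmod := congrArg (· % d) h
  simp only [Nat.mul_add_div hd, Nat.mul_add_mod, Nat.div_eq_of_lt hk, Nat.div_eq_of_lt hl,
    Nat.mod_eq_of_lt hk, Nat.mod_eq_of_lt hl, add_zero] at hdiv hmod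
  exact ⟨hdiv, hmod⟩

theorem mul_div_two_eq_mul_add_theta {d f : ℕ} (h : Even (d * f)) :
    d * f / 2 = d * (f / 2) + theta d f := by
  unfold theta
  split_ifs with hf
  · obtain ⟨g, rfl⟩ := hf
    rw [← two_mul, Nat.mul_div_cancel_left g two_pos, mul_left_comm,
      Nat.mul_div_cancel_left _ two_pos, add_zero]
  · obtain ⟨e, rfl⟩ := (Nat.even_mul.mp h).resolve_right hf
    obtain ⟨g, rfl⟩ := Nat.not_even_iff_odd.mp hf
    rw [show (e + e) * (2 * g + 1) = 2 * (e * (2 * g + 1)) by ring,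
      Nat.mul_div_cancel_left _ two_pos, show (2 * g + 1) / 2 = g by omega,
      show (e + e) / 2 = e by omega]
    ring

theorem theta_lt {d : ℕ} (hd : 0 < d) (f : ℕ) : theta d f < d := by
  unfold theta; split_ifs <;> omega

theorem IsPrimitiveRoot.pow_eq_neg_one_iff {R : Type*} [CommRing R] [IsDomain R] {ζ : R}
    {m : ℕ} (h : IsPrimitiveRoot ζ (2 * m)) (hm : 0 < m) {n : ℕ} (hn : n < 2 * m) :
    ζ ^ n = -1 ↔ n = m := by
  have hsq : ζ ^ m * ζ ^ m = 1 := by rw [← pow_add, ← two_mul, h.pow_eq_one]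
  have hne : ζ ^ m ≠ 1 := h.pow_ne_one_of_pos_of_lt hm.ne' (by omega)
  rw [← (mul_self_eq_one_iff.mp hsq).resolve_left hne]
  exact ⟨fun H => h.pow_inj hn (by omega) H, fun H => H ▸ rfl⟩

theorem IsPrimitiveRoot.one_add_pow_eq_zero_iff {R : Type*} [CommRing R] [IsDomain R] {x : R}
    {d f : ℕ} (hx : IsPrimitiveRoot x (d * f)) (heven : Even (d * f)) {w k : ℕ} (hw : w < f)
    (hk : k < d) : 1 + x ^ (d * w + k) = 0 ↔ w = f / 2 ∧ theta d f = k := by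
  have hx' : IsPrimitiveRoot x (2 * (d * f / 2)) := by rwa [Nat.two_mul_div_two_of_even heven]
  have hlt : d * w + k < 2 * (d * f / 2) := by
    rw [Nat.two_mul_div_two_of_even heven]; nlinarith
  have hm : 0 < d * f / 2 := by omega
  rw [add_eq_zero_iff_eq_neg', hx'.pow_eq_neg_one_iff hm hlt, mul_div_two_eq_mul_add_theta heven,
    Nat.mul_add_eq_mul_add_iff hk (theta_lt (by omega) f), eq_comm (a := k)]

theorem isPrimitiveRoot_of_forall_pow_eq {F : Type*} [Field F] [Fintype F] {ω : Fˣ}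
    (hω : ∀ x : Fˣ, ∃ n : ℕ, ω ^ n = x) : IsPrimitiveRoot (ω : F) (Fintype.card F - 1) := by
  classical
  rw [IsPrimitiveRoot.coe_units_iff, ← Fintype.card_units, ← Nat.card_eq_fintype_card,
    ← orderOf_eq_card_of_forall_mem_powers fun x => Submonoid.mem_powers_iff x ω |>.mpr (hω x)]
  exact IsPrimitiveRoot.orderOf ω

theorem IsPrimitiveRoot.image_pow_range_eq_univ_erase_zero {F : Type*} [Field F] [Fintype F]
    [DecidableEq F] {x : F} (hx : IsPrimitiveRoot x (Fintype.card F - 1)) :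
    (range (Fintype.card F - 1)).image (x ^ ·) = univ.erase 0 := by
  refine eq_of_subset_of_card_le (fun y hy => ?_) ?_
  · obtain ⟨n, -, rfl⟩ := mem_image.mp hy
    exact mem_erase.mpr ⟨pow_ne_zero n (hx.ne_zero (Nat.sub_pos_of_lt Fintype.one_lt_card).ne'),
      mem_univ _⟩
  · rw [card_image_of_injOn hx.injOn_pow, card_range, card_erase_of_mem (mem_univ 0), card_univ]

theorem AddChar.sum_range_pow_mul {F M : Type*} [Field F] [Fintype F] [DecidableEq F]
    [CommRing M] [IsDomain M] {ψ : AddChar F M} (hψ : ψ.IsPrimitive) {x : F}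
    (hx : IsPrimitiveRoot x (Fintype.card F - 1)) (c : F) :
    ∑ n ∈ range (Fintype.card F - 1), ψ (x ^ n * c)
      = (if c = 0 then (Fintype.card F : M) else 0) - 1 := by
  have hall := AddChar.sum_mulShift c hψ
  rw [← add_sum_erase _ _ (mem_univ 0), zero_mul, AddChar.map_zero_eq_one] at hall
  push_cast at hall
  rw [← sum_image (g := (x ^ ·)) (f := fun y => ψ (y * c)) hx.injOn_pow,
    hx.image_pow_range_eq_univ_erase_zero, ← hall, add_sub_cancel_left]

def AddChar.periodSum {R M : Type*} [Semiring R] [CommSemiring M] (ψ : AddChar R M) (x : R)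
    (d f i : ℕ) : M :=
  ∑ u ∈ range f, ψ (x ^ (d * u + i))

theorem gaussPeriod_eq_periodSum {p : ℕ} [NeZero p] {ζ : ℂ} (hζ : ζ ^ p = 1) (d f : ℕ)
    (ω : (ZMod p)ˣ) (i : ℕ) :
    gaussPeriod p d f ω ζ i = (AddChar.zmodChar p hζ).periodSum (ω : ZMod p) d f i :=
  rfl

theorem AddChar.sum_periodSum_mul_periodSum {R M : Type*} [CommSemiring R] [CommRing M]
    (ψ : AddChar R M) {x : R} {d f : ℕ} (hx : x ^ (d * f) = 1) (k : ℕ) :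
    ∑ l ∈ range d, ψ.periodSum x d f l * ψ.periodSum x d f (l + k)
      = ∑ w ∈ range f, ∑ n ∈ range (d * f), ψ (x ^ n * (1 + x ^ (d * w + k))) := by
  have shift (l u : ℕ) : ψ.periodSum x d f (l + k)
      = ∑ w ∈ range f, ψ (x ^ (d * (u + w) + (l + k))) := by
    refine (Function.Periodic.sum_range_add_left (fun v => ?_) u).symm
    rw [mul_add, add_right_comm, pow_add _ (d * v + _), hx, mul_one]
  have combine (l u w : ℕ) : ψ (x ^ (d * u + l)) * ψ (x ^ (d * (u + w) + (l + k)))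
      = ψ (x ^ (d * u + l) * (1 + x ^ (d * w + k))) := by
    rw [← AddChar.map_add_eq_mul]
    ring_nf
  calc _ = ∑ l ∈ range d, ∑ u ∈ range f, ∑ w ∈ range f,
        ψ (x ^ (d * u + l) * (1 + x ^ (d * w + k))) := by
        refine sum_congr rfl fun l _ => ?_
        rw [periodSum, sum_mul]
        refine sum_congr rfl fun u _ => ?_
        rw [shift l u, mul_sum]
        simp_rw [combine]
    _ = ∑ w ∈ range f, ∑ u ∈ range f, ∑ l ∈ range d,
        ψ (x ^ (d * u + l) * (1 + x ^ (d * w + k))) := by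
        rw [sum_comm]
        simp_rw [sum_comm (s := range d)]
        rw [sum_comm]
    _ = _ := by simp_rw [sum_range_mul_eq_sum_sum]

theorem sum_gaussPeriod_mul_general (p d f : ℕ) (hp : p.Prime) (hodd : Odd p)
    (hdvd : d ∣ p - 1) (hf : f = (p - 1) / d)
    (ω : (ZMod p)ˣ) (hω : ∀ x : (ZMod p)ˣ, ∃ n : ℕ, ω ^ n = x)
    (ζ : ℂ) (hζ : IsPrimitiveRoot ζ p)
    (k : ℕ) (hk : k < d) :
    ∑ l ∈ Finset.range d, gaussPeriod p d f ω ζ l * gaussPeriod p d f ω ζ (l + k)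
      = (p : ℂ) * (if theta d f = k then 1 else 0) - (f : ℂ) := by
  have : Fact p.Prime := ⟨hp⟩
  have hcard : Fintype.card (ZMod p) - 1 = d * f := by
    rw [ZMod.card, hf, Nat.mul_div_cancel' hdvd]
  have hgen := isPrimitiveRoot_of_forall_pow_eq hω
  have hx : IsPrimitiveRoot (ω : ZMod p) (d * f) := hcard ▸ hgen
  have hf0 : 0 < f := Nat.pos_of_mul_pos_left (hcard ▸ Nat.sub_pos_of_lt Fintype.one_lt_card)
  have heven : Even (d * f) := by rw [← hcard, ZMod.card]; exact Nat.Odd.sub_odd hodd odd_one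
  let ψ := AddChar.zmodChar p hζ.pow_eq_one
  have hψ : ψ.IsPrimitive := AddChar.zmodChar_primitive_of_primitive_root p hζ
  calc _ = ∑ w ∈ range f, ∑ n ∈ range (d * f),
        ψ ((ω : ZMod p) ^ n * (1 + (ω : ZMod p) ^ (d * w + k))) := by
        simp only [gaussPeriod_eq_periodSum hζ.pow_eq_one]
        exact ψ.sum_periodSum_mul_periodSum hx.pow_eq_one k
    _ = ∑ w ∈ range f, ((if w = f / 2 ∧ theta d f = k then (p : ℂ) else 0) - 1) := by
        refine sum_congr rfl fun w hw => ?_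
        rw [← hcard, AddChar.sum_range_pow_mul hψ hgen,
          ZMod.card, if_congr (hx.one_add_pow_eq_zero_iff heven (mem_range.mp hw) hk) rfl rfl]
    _ = _ := by
        have hf2 : f / 2 ∈ range f := mem_range.mpr (Nat.div_lt_self hf0 one_lt_two)
        rw [sum_sub_distrib, sum_const, card_range, nsmul_one]
        by_cases hθ : theta d f = k <;> simp [hθ, hf2]

/-- `Σ_{l=0}^{d-1} η_l·η_{l+k} = p·δ_{θk} − f`. -/
theorem sum_gaussPeriod_mul (p d f : ℕ) (hp : p.Prime) (hodd : Odd p)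
    (hd : 2 ≤ d) (hdvd : d ∣ p - 1) (hf : f = (p - 1) / d)
    (ω : (ZMod p)ˣ) (hω : ∀ x : (ZMod p)ˣ, ∃ n : ℕ, ω ^ n = x)
    (ζ : ℂ) (hζ : IsPrimitiveRoot ζ p)
    (k : ℕ) (hk : k < d) :
    ∑ l ∈ Finset.range d, gaussPeriod p d f ω ζ l * gaussPeriod p d f ω ζ (l + k)
      = (p : ℂ) * (if theta d f = k then 1 else 0) - (f : ℂ) :=
  sum_gaussPeriod_mul_general p d f hp hodd hdvd hf ω hω ζ hζ k hk
end

section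
/- (Lemma 2, case k = 2) Let p be an odd prime, d ≥ 2 with d ∣ p−1, f = (p−1)/d. For every 0 ≤ ν ≤ d−1: n(2,ν) + f² = p·(ν,θ). -/
open Finset

/-!
Expanding `η_i² η_{i+ν}` and using that a period is unchanged when its argument is multiplied by
a `d`-th power, `n(2,ν)` becomes `Σ_{v,w} Σ_{y ∈ 𝔽_p^*} ψ(y (1 + ω^{dv} + ω^ν ω^{dw}))`, so
orthogonality of the additive character `ψ(a) = ζ^a` gives
`p · #{(v,w) : 1 + ω^{dv} + ω^ν ω^{dw} = 0} - f²`.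
Since `-1 = ω^{d⌊f/2⌋ + θ}`, shifting `v` by `⌊f/2⌋` identifies this count with `(ν,θ)`.
-/

theorem Function.Periodic.sum_range_add {M : Type*} [AddCommMonoid M] {g : ℕ → M} {f : ℕ}
    (hg : Function.Periodic g f) (u : ℕ) :
    ∑ v ∈ range f, g (u + v) = ∑ v ∈ range f, g v := by
  induction u with
  | zero => simp
  | succ u ih =>
    rcases f with _ | n
    · simp
    rw [← ih, sum_range_succ, sum_range_succ' (fun v => g (u + v))]
    congr 1
    · simp only [add_assoc, add_comm 1]
    · simpa [add_assoc, add_comm 1 n] using hg u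

section cosetSum

variable {R M : Type*} [CommRing R] [CommRing M] (ψ : AddChar R M)

noncomputable def cosetSum (x : R) (d f : ℕ) (c : R) : M := ∑ u ∈ range f, ψ (c * x ^ (d * u))

variable {x : R} {d f : ℕ}

theorem cosetSum_mul_pow (hx : x ^ (d * f) = 1) (c : R) (v : ℕ) :
    cosetSum ψ x d f (c * x ^ (d * v)) = cosetSum ψ x d f c := by
  have hper : Function.Periodic (fun u => ψ (c * x ^ (d * u))) f := fun u => by
    simp only [mul_add, pow_add, hx, mul_one]
  simpa only [cosetSum, mul_add, pow_add, mul_assoc] using hper.sum_range_add v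

theorem cosetSum_sq_mul (hx : x ^ (d * f) = 1) (c y : R) :
    cosetSum ψ x d f c ^ 2 * cosetSum ψ x d f (c * y) =
      ∑ v ∈ range f, ∑ w ∈ range f, cosetSum ψ x d f (c * (1 + x ^ (d * v) + y * x ^ (d * w))) := by
  have hexpand : cosetSum ψ x d f c ^ 2 * cosetSum ψ x d f (c * y) =
      ∑ u ∈ range f, ∑ v ∈ range f, ∑ w ∈ range f,
        ψ (c * (1 + x ^ (d * v) + y * x ^ (d * w)) * x ^ (d * u)) := by
    rw [sq, mul_assoc]
    nth_rw 1 [cosetSum]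
    rw [sum_mul]
    refine sum_congr rfl fun u _ => ?_
    rw [← cosetSum_mul_pow ψ hx c u, ← cosetSum_mul_pow ψ hx (c * y) u, cosetSum, cosetSum,
      sum_mul, mul_sum]
    refine sum_congr rfl fun v _ => ?_
    rw [mul_sum, mul_sum]
    refine sum_congr rfl fun w _ => ?_
    rw [← AddChar.map_add_eq_mul, ← AddChar.map_add_eq_mul]
    ring_nf
  rw [hexpand, sum_comm]
  exact sum_congr rfl fun v _ => sum_comm

end cosetSum

theorem sum_range_mul_add {M : Type*} [AddCommMonoid M] (G : ℕ → M) (d f : ℕ) :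
    ∑ i ∈ range d, ∑ u ∈ range f, G (d * u + i) = ∑ n ∈ range (d * f), G n := by
  induction f with
  | zero => simp
  | succ f ih => simp only [sum_range_succ, sum_add_distrib, ih, mul_add_one, sum_range_add]

theorem sum_range_orderOf_pow {G M : Type*} [Group G] [Fintype G] [AddCommMonoid M] {a : G}
    (ha : ∀ x, x ∈ Subgroup.zpowers a) (g : G → M) :
    ∑ n ∈ range (orderOf a), g (a ^ n) = ∑ x, g x := by
  classical
  rw [← IsCyclic.image_range_orderOf ha, sum_image]
  intro m hm n hn h
  exact pow_injOn_Iio_orderOf (by simpa using hm) (by simpa using hn) h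

theorem AddChar.sum_units_mul {F R : Type*} [Field F] [Fintype F] [DecidableEq F] [CommRing R]
    [IsDomain R] {ψ : AddChar F R} (hψ : ψ.IsPrimitive) (c : F) :
    ∑ y : Fˣ, ψ (y * c) = if c = 0 then (Fintype.card F : R) - 1 else -1 := by
  have hsplit : ∑ y : F, ψ (y * c) = ψ (0 * c) + ∑ y : Fˣ, ψ (y * c) := by
    rw [← add_sum_erase _ _ (mem_univ 0)]
    congr 1
    symm
    refine sum_bij (fun y _ => (y : F)) (by simp) (fun _ _ _ _ => Units.ext) (fun a ha => ?_)
      (fun _ _ => rfl)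
    exact ⟨(Ne.isUnit (mem_erase.mp ha).1).unit, mem_univ _, rfl⟩
  rw [sum_mulShift c hψ, zero_mul, map_zero_eq_one] at hsplit
  split_ifs at hsplit ⊢ <;> linear_combination -hsplit

theorem AddChar.sum_range_cosetSum_pow_mul {F R : Type*} [Field F] [Fintype F] [DecidableEq F]
    [CommRing R] [IsDomain R] {ψ : AddChar F R} (hψ : ψ.IsPrimitive) {ω : Fˣ} {d f : ℕ}
    (hω : ∀ y, y ∈ Subgroup.zpowers ω) (hord : orderOf ω = d * f) (c : F) :
    ∑ i ∈ range d, cosetSum ψ (ω : F) d f (ω ^ i * c) =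
      if c = 0 then (Fintype.card F : R) - 1 else -1 := by
  rw [← AddChar.sum_units_mul hψ c, ← sum_range_orderOf_pow hω, hord, ← sum_range_mul_add]
  refine sum_congr rfl fun i _ => sum_congr rfl fun u _ => ?_
  rw [Units.val_pow_eq_pow_val, pow_add]
  ring_nf

theorem mul_div_two_add_theta {d f : ℕ} (h : Even (d * f)) :
    d * (f / 2) + theta d f = d * f / 2 := by
  unfold theta
  split_ifs with hf
  · obtain ⟨k, rfl⟩ := hf
    rw [← two_mul, Nat.mul_div_cancel_left _ two_pos, mul_left_comm,
      Nat.mul_div_cancel_left _ two_pos, add_zero]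
  · obtain ⟨k, rfl⟩ := Nat.not_even_iff_odd.mp hf
    obtain ⟨l, rfl⟩ := (Nat.even_mul.mp h).resolve_right hf
    rw [show (2 * k + 1) / 2 = k by omega, show (l + l) / 2 = l by omega,
      show (l + l) * (2 * k + 1) = 2 * (l * (2 * k + 1)) by ring, Nat.mul_div_cancel_left _ two_pos]
    ring

theorem IsPrimitiveRoot.pow_mul_div_two_mul_pow_theta {R : Type*} [CommRing R] [IsDomain R]
    {x : R} {d f : ℕ} (hx : IsPrimitiveRoot x (d * f)) (h0 : d * f ≠ 0) (h2 : Even (d * f)) :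
    x ^ (d * (f / 2)) * x ^ theta d f = -1 := by
  rw [← pow_add, mul_div_two_add_theta h2]
  have hdvd : d * f / 2 ∣ d * f := Nat.div_dvd_of_dvd (even_iff_two_dvd.mp h2)
  have hhalf : d * f / 2 ≠ 0 := by
    obtain ⟨k, hk⟩ := h2
    omega
  have h2' := hx.pow_of_dvd hhalf hdvd
  rw [Nat.div_div_self (even_iff_two_dvd.mp h2) h0] at h2'
  exact h2'.eq_neg_one_of_two_right

theorem cycNum_eq_sum (p d f : ℕ) (ω : (ZMod p)ˣ) (i j : ℕ) :
    cycNum p d f ω i j = ∑ a ∈ range f, ∑ b ∈ range f,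
      if (1 : ZMod p) + (ω : ZMod p) ^ (d * a + i) = (ω : ZMod p) ^ (d * b + j) then 1 else 0 := by
  rw [← sum_product', ← card_filter, cycNum, ← Nat.card_eq_finsetCard]
  refine Nat.card_congr (Equiv.subtypeEquivRight fun uv => ?_)
  simp only [mem_filter, mem_product, mem_range, and_assoc]

theorem cycNum_theta_eq_sum {p d f : ℕ} [Fact p.Prime] {ω : (ZMod p)ˣ}
    (hx : IsPrimitiveRoot (ω : ZMod p) (d * f)) (h0 : d * f ≠ 0) (h2 : Even (d * f)) (ν : ℕ) :
    cycNum p d f ω ν (theta d f) = ∑ v ∈ range f, ∑ w ∈ range f,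
      if 1 + (ω : ZMod p) ^ (d * v) + (ω : ZMod p) ^ ν * (ω : ZMod p) ^ (d * w) = 0
        then 1 else 0 := by
  rw [cycNum_eq_sum]
  conv_rhs => rw [sum_comm]
  set x := (ω : ZMod p)
  have hper : ∀ a, Function.Periodic
      (fun b => if 1 + x ^ (d * a + ν) = x ^ (d * b + theta d f) then 1 else 0) f :=
    fun a b => by simp only [mul_add, pow_add, hx.pow_eq_one, mul_one]
  have hneg := hx.pow_mul_div_two_mul_pow_theta h0 h2
  refine sum_congr rfl fun a _ => ?_
  rw [← (hper a).sum_range_add (f / 2)]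
  refine sum_congr rfl fun b _ => if_congr ?_ rfl rfl
  rw [mul_add, pow_add, pow_add, pow_add, mul_right_comm, hneg]
  constructor <;> intro h <;> linear_combination h

theorem nInt_two_eq {p d f : ℕ} [Fact p.Prime] {ω : (ZMod p)ˣ}
    (hω : ∀ y, y ∈ Subgroup.zpowers ω) (hord : orderOf ω = d * f) {ζ : ℂ}
    (hζ : IsPrimitiveRoot ζ p) (ν : ℕ) :
    nInt p d f ω ζ 2 ν = p * ∑ v ∈ range f, ∑ w ∈ range f,
      (if 1 + (ω : ZMod p) ^ (d * v) + (ω : ZMod p) ^ ν * (ω : ZMod p) ^ (d * w) = 0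
        then 1 else 0 : ℂ) - f ^ 2 := by
  set x := (ω : ZMod p)
  set ψ := AddChar.zmodChar p hζ.pow_eq_one
  have hx : x ^ (d * f) = 1 := by rw [← hord, ← orderOf_units, pow_orderOf_eq_one]
  have hgauss : ∀ i, gaussPeriod p d f ω ζ i = cosetSum ψ x d f (x ^ i) := fun i =>
    sum_congr rfl fun u _ => by rw [AddChar.zmodChar_apply, pow_add, mul_comm]
  calc nInt p d f ω ζ 2 ν
      = ∑ i ∈ range d, ∑ v ∈ range f, ∑ w ∈ range f,
          cosetSum ψ x d f (x ^ i * (1 + x ^ (d * v) + x ^ ν * x ^ (d * w))) := by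
        simp only [nInt, hgauss, pow_add, cosetSum_sq_mul ψ hx]
    _ = ∑ v ∈ range f, ∑ w ∈ range f, ∑ i ∈ range d,
          cosetSum ψ x d f (x ^ i * (1 + x ^ (d * v) + x ^ ν * x ^ (d * w))) := by
        rw [sum_comm]
        exact sum_congr rfl fun v _ => sum_comm
    _ = ∑ v ∈ range f, ∑ w ∈ range f,
          (p * (if 1 + x ^ (d * v) + x ^ ν * x ^ (d * w) = 0 then 1 else 0) - 1 : ℂ) := by
        refine sum_congr rfl fun v _ => sum_congr rfl fun w _ => ?_
        rw [AddChar.sum_range_cosetSum_pow_mul (AddChar.zmodChar_primitive_of_primitive_root p hζ)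
          hω hord, ZMod.card]
        split_ifs <;> ring
    _ = _ := by
        simp only [sum_sub_distrib, mul_sum, sum_const, card_range, nsmul_eq_mul, mul_one]
        ring

theorem nInt_two_general (p d f : ℕ) (hp : p.Prime) (hodd : Odd p)
    (hdvd : d ∣ p - 1) (hf : f = (p - 1) / d)
    (ω : (ZMod p)ˣ) (hω : ∀ x : (ZMod p)ˣ, ∃ n : ℕ, ω ^ n = x)
    (ζ : ℂ) (hζ : IsPrimitiveRoot ζ p)
    (ν : ℕ) :
    nInt p d f ω ζ 2 ν + (f : ℂ) ^ 2 = (p : ℂ) * (cycNum p d f ω ν (theta d f) : ℂ) := by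
  have : Fact p.Prime := ⟨hp⟩
  have hdf : d * f = p - 1 := hf ▸ Nat.mul_div_cancel' hdvd
  have hzp : ∀ y, y ∈ Subgroup.zpowers ω := fun y =>
    (hω y).elim fun n hn => hn ▸ Subgroup.npow_mem_zpowers ω n
  have hord : orderOf ω = d * f := by
    rw [orderOf_eq_card_of_forall_mem_zpowers hzp, Nat.card_eq_fintype_card, ZMod.card_units, hdf]
  have hx : IsPrimitiveRoot (ω : ZMod p) (d * f) := by
    rw [← hord, ← orderOf_units]
    exact IsPrimitiveRoot.orderOf _
  have h0 : d * f ≠ 0 := by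
    have := hp.two_le
    omega
  have h2 : Even (d * f) := hdf ▸ Nat.Odd.sub_odd hodd odd_one
  rw [nInt_two_eq hzp hord hζ, cycNum_theta_eq_sum hx h0 h2]
  push_cast
  ring

/-- Lemma 2, case k = 2: `n(2,ν) + f² = p·(ν,θ)`. -/
theorem nInt_two (p d f : ℕ) (hp : p.Prime) (hodd : Odd p)
    (hd : 2 ≤ d) (hdvd : d ∣ p - 1) (hf : f = (p - 1) / d)
    (ω : (ZMod p)ˣ) (hω : ∀ x : (ZMod p)ˣ, ∃ n : ℕ, ω ^ n = x)
    (ζ : ℂ) (hζ : IsPrimitiveRoot ζ p)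
    (ν : ℕ) (hν : ν < d) :
    nInt p d f ω ζ 2 ν + (f : ℂ) ^ 2 = (p : ℂ) * (cycNum p d f ω ν (theta d f) : ℂ) :=
  nInt_two_general p d f hp hodd hdvd hf ω hω ζ hζ ν
end
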